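/- Equivalently in scalar form: if X ⊂ ℝ^N is partitioned into Y₁, Y₂ with positive definite sample covariances Σ₁, Σ₂ and p = |Y₁|/|X|, then (det Σ₁)^p · (det Σ₂)^(1−p) ≤ det Σ_X. -/

import Mathlib

open Matrix

noncomputable def sampleMean {N : ℕ} (S : Finset (Fin N → ℝ)) : Fin N → ℝ :=
  (S.card : ℝ)⁻¹ • ∑ x ∈ S, x

noncomputable def sampleCov {N : ℕ} (S : Finset (Fin N → ℝ)) : Matrix (Fin N) (Fin N) ℝ :=
  (S.card : ℝ)⁻¹ • ∑ x ∈ S, vecMulVec (x - sampleMean S) (x - sampleMean S)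

/-!
Splitting the scatter of `X` about its mean along the partition gives the law of total
covariance `Σ_X = p Σ₁ + (1 - p) Σ₂ + B`, where the between-group scatter
`B = p v₁ v₁ᵀ + (1 - p) v₂ v₂ᵀ` (with `vᵢ` the offset of the mean of `Yᵢ` from that of `X`)
is positive semidefinite. Hence `det Σ_X ≥ det (p Σ₁ + (1 - p) Σ₂)` by monotonicity of the
determinant, and the right side is at least `(det Σ₁)^p (det Σ₂)^(1-p)` by log-concavity of the
determinant. For `A` positive definite and `B` positive semidefinite, congruence by `A^(1/2)`
gives `det (a A + b B) = det A * ∏ (a + b μᵢ)` with `μᵢ ≥ 0` the eigenvalues of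
`A^(-1/2) B A^(-1/2)`; both determinant inequalities thereby become the factorwise scalar
inequalities `1 + μ ≥ 1` and (weighted AM-GM) `p + (1 - p) μ ≥ μ^(1-p)`.
-/

namespace Matrix

theorem posSemidef_vecMulVec_self {n : Type*} [Finite n] (v : n → ℝ) :
    (vecMulVec v v).PosSemidef := by
  simpa using posSemidef_vecMulVec_self_star v

variable {n : Type*} [Fintype n] [DecidableEq n]

theorem IsHermitian.det_smul_one_add_smul {C : Matrix n n ℝ} (hC : C.IsHermitian) (a b : ℝ) :
    (a • 1 + b • C).det = ∏ i, (a + b * hC.eigenvalues i) := by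
  set U := Unitary.conjStarAlgAut ℝ (Matrix n n ℝ) hC.eigenvectorUnitary
  have hdiag : a • 1 + b • C = U (diagonal fun i ↦ a + b * hC.eigenvalues i) := by
    conv_lhs => rw [hC.spectral_theorem]
    rw [← map_one U, ← map_smul, ← map_smul, ← map_add, ← diagonal_one, ← diagonal_smul,
      ← diagonal_smul, diagonal_add]
    congr 2
    ext i
    simp
  have hU : (hC.eigenvectorUnitary : Matrix n n ℝ) *
      star (hC.eigenvectorUnitary : Matrix n n ℝ) = 1 :=
    Unitary.mul_star_self_of_mem hC.eigenvectorUnitary.2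
  rw [hdiag, Unitary.conjStarAlgAut_apply, det_mul_right_comm, hU, one_mul, det_diagonal]

open scoped MatrixOrder in
theorem PosDef.exists_det_smul_add_smul {A B : Matrix n n ℝ} (hA : A.PosDef)
    (hB : B.PosSemidef) :
    ∃ μ : n → ℝ, (∀ i, 0 ≤ μ i) ∧
      ∀ a b : ℝ, (a • A + b • B).det = A.det * ∏ i, (a + b * μ i) := by
  set S := CFC.sqrt A
  have hSS : S * S = A := CFC.sqrt_mul_sqrt_self A hA.posSemidef.nonneg
  have hS : S.IsHermitian := (CFC.sqrt_nonneg A).posSemidef.1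
  have hdetS : S.det * S.det = A.det := by rw [← det_mul, hSS]
  have hSunit : IsUnit S.det := isUnit_of_mul_isUnit_left (hdetS ▸ hA.det_pos.ne'.isUnit)
  set C := S⁻¹ * B * S⁻¹ with hCdef
  have hC : C.PosSemidef := by simpa only [hS.inv.eq] using hB.mul_mul_conjTranspose_same S⁻¹
  refine ⟨hC.1.eigenvalues, hC.eigenvalues_nonneg, fun a b ↦ ?_⟩
  have hconj : a • A + b • B = S * (a • 1 + b • C) * S := by
    rw [Matrix.mul_add, Matrix.add_mul, Matrix.mul_smul, Matrix.smul_mul, Matrix.mul_one, hSS,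
      Matrix.mul_smul, Matrix.smul_mul, hCdef, Matrix.mul_assoc S⁻¹,
      mul_nonsing_inv_cancel_left S _ hSunit, nonsing_inv_mul_cancel_right S _ hSunit]
  rw [hconj, det_mul, det_mul, hC.1.det_smul_one_add_smul, ← hdetS]
  ring

variable {A B : Matrix n n ℝ}

theorem PosDef.det_le_det_add (hA : A.PosDef) (hB : B.PosSemidef) : A.det ≤ (A + B).det := by
  obtain ⟨μ, hμ, hdet⟩ := hA.exists_det_smul_add_smul hB
  have h := hdet 1 1
  simp only [one_smul, one_mul] at h
  rw [h]
  exact le_mul_of_one_le_right hA.det_pos.le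
    (Finset.one_le_prod fun i _ ↦ le_add_of_nonneg_right (hμ i))

theorem PosDef.det_rpow_mul_det_rpow_le (hA : A.PosDef) (hB : B.PosSemidef) {p q : ℝ}
    (hp : 0 ≤ p) (hq : 0 ≤ q) (hpq : p + q = 1) :
    A.det ^ p * B.det ^ q ≤ (p • A + q • B).det := by
  obtain ⟨μ, hμ, hdet⟩ := hA.exists_det_smul_add_smul hB
  have hBdet : B.det = A.det * ∏ i, μ i := by simpa using hdet 0 1
  have hA0 := hA.det_pos
  calc A.det ^ p * B.det ^ q = A.det * ∏ i, μ i ^ q := by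
        rw [hBdet, Real.mul_rpow hA0.le (Finset.prod_nonneg fun i _ ↦ hμ i),
          Real.finsetProd_rpow _ _ fun i _ ↦ hμ i, ← mul_assoc, ← Real.rpow_add hA0, hpq,
          Real.rpow_one]
    _ ≤ A.det * ∏ i, (p + q * μ i) := by
        gcongr with i
        · exact fun i _ ↦ Real.rpow_nonneg (hμ i) q
        · simpa using Real.geom_mean_le_arith_mean2_weighted hp hq zero_le_one (hμ i) hpq
    _ = (p • A + q • B).det := (hdet p q).symm

end Matrix

theorem Finset.card_smul_inv_card_smul_sum {α M : Type*} [AddCommGroup M] [Module ℝ M]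
    (s : Finset α) (f : α → M) :
    (s.card : ℝ) • ((s.card : ℝ)⁻¹ • ∑ x ∈ s, f x) = ∑ x ∈ s, f x := by
  rcases s.eq_empty_or_nonempty with rfl | hs
  · simp
  · rw [smul_smul, mul_inv_cancel₀ (by positivity), one_smul]

section SampleStatistics

variable {N : ℕ} (S : Finset (Fin N → ℝ))

theorem card_smul_sampleMean : (S.card : ℝ) • sampleMean S = ∑ x ∈ S, x :=
  S.card_smul_inv_card_smul_sum id

theorem card_smul_sampleCov :
    (S.card : ℝ) • sampleCov S = ∑ x ∈ S, vecMulVec (x - sampleMean S) (x - sampleMean S) :=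
  S.card_smul_inv_card_smul_sum _

theorem sum_sub_sampleMean : ∑ x ∈ S, (x - sampleMean S) = 0 := by
  rw [Finset.sum_sub_distrib, Finset.sum_const, ← Nat.cast_smul_eq_nsmul ℝ,
    card_smul_sampleMean, sub_self]

theorem posSemidef_sampleCov : (sampleCov S).PosSemidef :=
  (posSemidef_sum S fun x _ ↦ posSemidef_vecMulVec_self _).smul (by positivity)

theorem sum_vecMulVec_sub_eq (m : Fin N → ℝ) :
    ∑ x ∈ S, vecMulVec (x - m) (x - m) =
      (S.card : ℝ) • (sampleCov S + vecMulVec (sampleMean S - m) (sampleMean S - m)) := by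
  set d := sampleMean S - m
  have hcoord : ∀ i, ∑ x ∈ S, (x i - sampleMean S i) = 0 := fun i ↦ by
    simpa using congr_fun (sum_sub_sampleMean S) i
  have hcross₁ : ∑ x ∈ S, vecMulVec (x - sampleMean S) d = 0 := by
    ext i j
    simp only [Matrix.sum_apply, vecMulVec_apply, Pi.sub_apply, ← Finset.sum_mul, hcoord,
      zero_mul, Matrix.zero_apply]
  have hcross₂ : ∑ x ∈ S, vecMulVec d (x - sampleMean S) = 0 := by
    ext i j
    simp only [Matrix.sum_apply, vecMulVec_apply, Pi.sub_apply, ← Finset.mul_sum, hcoord,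
      mul_zero, Matrix.zero_apply]
  have hsplit : ∀ x : Fin N → ℝ, x - m = (x - sampleMean S) + d := fun x ↦ by
    simp only [d]; abel
  simp only [hsplit, add_vecMulVec, vecMulVec_add, Finset.sum_add_distrib, hcross₁, hcross₂,
    Finset.sum_const, ← Nat.cast_smul_eq_nsmul ℝ, ← card_smul_sampleCov, smul_add]
  abel

theorem sampleCov_union {Y₁ Y₂ : Finset (Fin N → ℝ)} (h : Disjoint Y₁ Y₂) :
    sampleCov (Y₁ ∪ Y₂) =
      ((Y₁.card : ℝ) / (Y₁ ∪ Y₂).card) • (sampleCov Y₁ + vecMulVec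
          (sampleMean Y₁ - sampleMean (Y₁ ∪ Y₂)) (sampleMean Y₁ - sampleMean (Y₁ ∪ Y₂))) +
        ((Y₂.card : ℝ) / (Y₁ ∪ Y₂).card) • (sampleCov Y₂ + vecMulVec
          (sampleMean Y₂ - sampleMean (Y₁ ∪ Y₂)) (sampleMean Y₂ - sampleMean (Y₁ ∪ Y₂))) := by
  rw [sampleCov, Finset.sum_union h, sum_vecMulVec_sub_eq, sum_vecMulVec_sub_eq, smul_add,
    smul_smul, smul_smul, inv_mul_eq_div, inv_mul_eq_div]

end SampleStatistics

theorem det_cov_geometric_mean_le_general {N : ℕ} (Y₁ Y₂ : Finset (Fin N → ℝ))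
    (h₁ : Y₁.Nonempty) (hdisj : Disjoint Y₁ Y₂)
    (X : Finset (Fin N → ℝ)) (hX : X = Y₁ ∪ Y₂)
    (hc₁ : (sampleCov Y₁).PosDef)
    (p : ℝ) (hp : p = (Y₁.card : ℝ) / X.card) :
    (sampleCov Y₁).det ^ p * (sampleCov Y₂).det ^ (1 - p) ≤ (sampleCov X).det := by
  subst hX
  have hcard : ((Y₁ ∪ Y₂).card : ℝ) = Y₁.card + Y₂.card := by
    rw [Finset.card_union_of_disjoint hdisj, Nat.cast_add]
  have hY₁ : (0 : ℝ) < Y₁.card := by exact_mod_cast h₁.card_pos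
  have hp₀ : 0 < p := by rw [hp]; positivity
  have hq : 1 - p = Y₂.card / (Y₁ ∪ Y₂).card := by
    rw [hp, hcard]
    field_simp
    ring
  have hq₀ : 0 ≤ 1 - p := by rw [hq]; positivity
  rw [sampleCov_union hdisj, ← hp, ← hq, smul_add, smul_add, add_add_add_comm]
  calc (sampleCov Y₁).det ^ p * (sampleCov Y₂).det ^ (1 - p)
      ≤ (p • sampleCov Y₁ + (1 - p) • sampleCov Y₂).det :=
        hc₁.det_rpow_mul_det_rpow_le (posSemidef_sampleCov Y₂) hp₀.le hq₀ (by ring)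
    _ ≤ _ :=
        ((hc₁.smul hp₀).add_posSemidef ((posSemidef_sampleCov Y₂).smul hq₀)).det_le_det_add
          (((posSemidef_vecMulVec_self _).smul hp₀.le).add
            ((posSemidef_vecMulVec_self _).smul hq₀))

theorem det_cov_geometric_mean_le {N : ℕ} (Y₁ Y₂ : Finset (Fin N → ℝ))
    (h₁ : Y₁.Nonempty) (h₂ : Y₂.Nonempty) (hdisj : Disjoint Y₁ Y₂)
    (X : Finset (Fin N → ℝ)) (hX : X = Y₁ ∪ Y₂)
    (hc₁ : (sampleCov Y₁).PosDef) (hc₂ : (sampleCov Y₂).PosDef)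
    (p : ℝ) (hp : p = (Y₁.card : ℝ) / X.card) :
    (sampleCov Y₁).det ^ p * (sampleCov Y₂).det ^ (1 - p) ≤ (sampleCov X).det :=
  det_cov_geometric_mean_le_general Y₁ Y₂ h₁ hdisj X hX hc₁ p hp
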